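/- For any circle graph G, ψ(G) ≥ an(G), where an(G) is the asteroidal number of G. -/

import Mathlib

open SimpleGraph

/-- The circle on which chord diagrams live (the unit circle as an additive circle). -/
abbrev Circ : Type := AddCircle (1 : ℝ)

/-- A circle representation of a graph `G`: each vertex `v` gets a chord with
distinct endpoints `p v` and `q v`, all `2|V|` endpoints are distinct, and two
distinct vertices are adjacent iff their chords cross (i.e. exactly one endpoint
of one chord lies strictly inside an arc determined by the other chord). -/
structure CircleRep (V : Type) (G : SimpleGraph V) where
  p : V → Circ
  q : V → Circ
  inj : Function.Injective (Sum.elim p q)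
  adj : ∀ u v : V, G.Adj u v ↔ u ≠ v ∧
    Xor' (sbtw (p v) (p u) (q v)) (sbtw (p v) (q u) (q v))

namespace CircleRep

variable {V : Type} {G : SimpleGraph V} (R : CircleRep V G)

/-- The two open arcs of the chord of `v`: `b = true` is the arc from `p v`
clockwise to `q v`, `b = false` is the other arc. -/
def ArcSet (v : V) (b : Bool) : Set Circ :=
  if b then {x | sbtw (R.p v) x (R.q v)} else {x | sbtw (R.q v) x (R.p v)}

/-- The arc `b` of the chord of `v` is empty: it contains both endpoints of no chord. -/
def ArcEmpty (v : V) (b : Bool) : Prop :=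
  ∀ u : V, ¬ (R.p u ∈ R.ArcSet v b ∧ R.q u ∈ R.ArcSet v b)

/-- A chord is peripheral if one of its arcs is empty. -/
def Peripheral (v : V) : Prop := ∃ b : Bool, R.ArcEmpty v b

/-- A set `T` of corner points satisfies the chord of `v` if each of the two
arcs of the chord contains a corner. -/
def SatChord (T : Finset Circ) (v : V) : Prop :=
  (∃ t ∈ T, t ∈ R.ArcSet v true) ∧ (∃ t ∈ T, t ∈ R.ArcSet v false)

/-- `T` is a satisfying set of corners: the corners are distinct from all chord
endpoints and every chord has a corner in each of its arcs. -/
def GoodCorners (T : Finset Circ) : Prop :=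
  (∀ t ∈ T, ∀ v : V, t ≠ R.p v ∧ t ≠ R.q v) ∧ ∀ v : V, R.SatChord T v

/-- The polygon number `ψ_r` of a circle representation: the minimum number of
corners that must be added to satisfy all chords. -/
noncomputable def polyNum : ℕ :=
  sInf {k | ∃ T : Finset Circ, T.card = k ∧ R.GoodCorners T}

/-- `c 0, …, c (ℓ-1)` is an ℓ-independent set in series: there is a point `x`
on the circle such that a clockwise traversal starting at `x` encounters both
endpoints of `c i` before both endpoints of `c j` whenever `i < j`. -/
def SeriesIndep {ℓ : ℕ} (c : Fin ℓ → V) : Prop :=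
  Function.Injective c ∧ ∃ x : Circ,
    (∀ i : Fin ℓ, x ≠ R.p (c i) ∧ x ≠ R.q (c i)) ∧
    ∀ i j : Fin ℓ, i < j →
      ∀ e ∈ ({R.p (c i), R.q (c i)} : Set Circ),
        ∀ f ∈ ({R.p (c j), R.q (c j)} : Set Circ), sbtw x e f

end CircleRep

/-- The polygon number `ψ(G)`: the minimum `k` such that `G` has a circle
representation together with `k` corners satisfying all chords. -/
noncomputable def polygonNumber {V : Type} (G : SimpleGraph V) : ℕ :=
  sInf {k | ∃ R : CircleRep V G, ∃ T : Finset Circ, T.card = k ∧ R.GoodCorners T}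

/-- A permutation graph: a graph having a circle representation admitting two
corner points such that each chord has one corner in each of its arcs. -/
def IsPermutationGraph {V : Type} (G : SimpleGraph V) : Prop :=
  ∃ R : CircleRep V G, ∃ T : Finset Circ, T.card = 2 ∧ R.GoodCorners T

/-- The clique cover number `κ(G)`: least `n` such that the vertex set can be
partitioned into `n` cliques. -/
noncomputable def cliqueCoverNumber {V : Type} (G : SimpleGraph V) : ℕ :=
  sInf {n | ∃ f : V → Fin n, ∀ u v : V, f u = f v → u = v ∨ G.Adj u v}

/-- The independence number `α(G)`. -/
noncomputable def indepNumber {V : Type} (G : SimpleGraph V) : ℕ :=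
  sSup {n | ∃ s : Finset V, (∀ u ∈ s, ∀ v ∈ s, u ≠ v → ¬ G.Adj u v) ∧ s.card = n}

/-- `A` is an asteroidal set of `G`: for every `a ∈ A`, any two vertices of
`A \ {a}` are connected by a path in `G - N[a]`. -/
def IsAsteroidal {V : Type} (G : SimpleGraph V) (A : Set V) : Prop :=
  ∀ a ∈ A, ∀ x ∈ A, ∀ y ∈ A, x ≠ a → y ≠ a →
    ∃ (hx : x ∈ {w | w ≠ a ∧ ¬ G.Adj a w}) (hy : y ∈ {w | w ≠ a ∧ ¬ G.Adj a w}),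
      (G.induce {w | w ≠ a ∧ ¬ G.Adj a w}).Reachable ⟨x, hx⟩ ⟨y, hy⟩

/-- The asteroidal number `an(G)`: maximum size of an asteroidal set. -/
noncomputable def asteroidalNumber {V : Type} (G : SimpleGraph V) : ℕ :=
  sSup {n | ∃ A : Finset V, IsAsteroidal G ↑A ∧ A.card = n}

/-- `G` is AT-free: it has no asteroidal triple. -/
def ATFree {V : Type} (G : SimpleGraph V) : Prop :=
  ¬ ∃ a b c : V, a ≠ b ∧ a ≠ c ∧ b ≠ c ∧ IsAsteroidal G {a, b, c}

/-- `G` is distance hereditary: in every connected induced subgraph, distances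
agree with those of `G`. -/
def DistanceHereditary {V : Type} (G : SimpleGraph V) : Prop :=
  ∀ s : Set V, (G.induce s).Connected →
    ∀ u v : ↥s, (G.induce s).dist u v = G.dist (u : V) (v : V)

/-- `{V1, V2}` is a split of `G`. -/
def IsSplit {V : Type} (G : SimpleGraph V) (V1 V2 : Set V) : Prop :=
  V1 ∪ V2 = Set.univ ∧ Disjoint V1 V2 ∧ 1 < V1.ncard ∧ 1 < V2.ncard ∧
    ∀ x ∈ V1, ∀ y ∈ V2,
      (G.Adj x y ↔ (∃ y' ∈ V2, G.Adj x y') ∧ (∃ x' ∈ V1, G.Adj x' y))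

/-!
Fix a circle representation with a satisfying set `T` of corners, and an asteroidal set `A`.
Two crossing chords that both avoid the chord of `a` lie in the same arc of `a`, so along the
paths of `G - N[a]` the chords of `A \ {a}` all stay in one arc of `a`; call the other one the
far arc of `a`, and pick a corner in it. For distinct `a, b ∈ A` the far arc of `a` lies inside
the arc of `b` containing `a`, which is disjoint from the far arc of `b`: the chosen corners are
distinct, so `|A| ≤ |T|`.
-/

open Set

section CircularOrder

variable {α : Type*} [CircularOrder α] {a b c d x : α}

theorem sbtw_iff_not_sbtw_of_ne (hab : a ≠ b) (hxa : x ≠ a) (hxb : x ≠ b) :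
    sbtw b x a ↔ ¬sbtw a x b := by
  rw [sbtw_iff_not_btw, not_iff_not]
  refine ⟨fun h => h.sbtw_of_not_btw fun h' => ?_, btw_of_sbtw⟩
  rcases h.antisymm h' with h | h | h
  exacts [hxa h.symm, hxb h, hab h.symm]

theorem cIoo_subset_cIoo_of_sbtw (hc : sbtw a c d) (hd : sbtw a d b) : cIoo c d ⊆ cIoo a b :=
  fun _ hx => sbtw_trans_right (hc.trans_left hx) hd

theorem cIoo_subset_or_subset_of_sbtw (hc : sbtw a c b) (hd : sbtw a d b) :
    cIoo c d ⊆ cIoo a b ∨ cIoo b a ⊆ cIoo c d := by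
  rcases eq_or_ne c d with rfl | hcd
  · exact Or.inl fun _ hx => (sbtw_irrefl_left_right hx).elim
  by_cases hacd : sbtw a c d
  · exact Or.inl (cIoo_subset_cIoo_of_sbtw hacd hd)
  · have had : a ≠ d := by rintro rfl; exact sbtw_irrefl_left hd
    have hca : c ≠ a := by rintro rfl; exact sbtw_irrefl_left hc
    have hdca : sbtw d c a := (sbtw_iff_not_sbtw_of_ne had hca hcd).2 hacd
    exact Or.inr (cIoo_subset_cIoo_of_sbtw hc.cyclic_left hdca.cyclic_left)

end CircularOrder

namespace AddCircle

variable {𝕜 : Type*} [Field 𝕜] [LinearOrder 𝕜] [IsStrictOrderedRing 𝕜] [Archimedean 𝕜]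
  {p : 𝕜} [Fact (0 < p)]

theorem cIoo_infinite {a b : AddCircle p} (hab : a ≠ b) : (cIoo a b).Infinite := by
  obtain ⟨α, rfl⟩ := QuotientAddGroup.mk_surjective a
  obtain ⟨β, ⟨hαβ, hβp⟩, rfl⟩ : ∃ β ∈ Ioc α (α + p), (β : AddCircle p) = b :=
    ⟨_, (equivIoc p α b).2, coe_equivIoc⟩
  have hβp' : β < α + p := hβp.lt_of_ne fun h => hab (by rw [h, coe_add_period])
  have hsub : ((↑) : 𝕜 → AddCircle p) '' Ioo α β ⊆ cIoo (α : AddCircle p) β := by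
    rintro _ ⟨t, ⟨hαt, htβ⟩, rfl⟩
    rw [mem_cIoo, sbtw_iff_not_btw, QuotientAddGroup.btw_coe_iff, not_le,
      ← toIcoMod_add_right, (toIcoMod_eq_self _).2 ⟨by linarith, by linarith⟩,
      ← toIocMod_add_right, (toIocMod_eq_self _).2 ⟨by linarith, by linarith⟩]
    linarith
  refine Infinite.mono hsub ((Ioo_infinite hαβ).image fun x hx y hy h => ?_)
  exact (coe_eq_coe_iff_of_mem_Ico ⟨hx.1.le, hx.2.trans hβp'⟩ ⟨hy.1.le, hy.2.trans hβp'⟩).1 h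

end AddCircle

namespace CircleRep

variable {V : Type} {G : SimpleGraph V} (R : CircleRep V G)

def ChordInArc (u v : V) (s : Bool) : Prop :=
  R.p u ∈ R.ArcSet v s ∧ R.q u ∈ R.ArcSet v s

theorem arcSet_true (v : V) : R.ArcSet v true = cIoo (R.p v) (R.q v) := rfl

theorem arcSet_false (v : V) : R.ArcSet v false = cIoo (R.q v) (R.p v) := rfl

theorem p_ne_q (v w : V) : R.p v ≠ R.q w := R.inj.ne Sum.inl_ne_inr

theorem p_injective : Function.Injective R.p := R.inj.comp Sum.inl_injective

theorem q_injective : Function.Injective R.q := R.inj.comp Sum.inr_injective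

theorem arcSet_infinite (v : V) (s : Bool) : (R.ArcSet v s).Infinite := by
  cases s
  · rw [arcSet_false]; exact AddCircle.cIoo_infinite (R.p_ne_q v v).symm
  · rw [arcSet_true]; exact AddCircle.cIoo_infinite (R.p_ne_q v v)

theorem p_notMem_arcSet (v : V) (s : Bool) : R.p v ∉ R.ArcSet v s := by
  cases s
  · rw [arcSet_false, mem_cIoo]; exact sbtw_irrefl_right
  · rw [arcSet_true, mem_cIoo]; exact sbtw_irrefl_left

theorem disjoint_arcSet_not (v : V) (s : Bool) : Disjoint (R.ArcSet v s) (R.ArcSet v (!s)) := by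
  cases s <;> simp only [Bool.not_false, Bool.not_true, arcSet_true, arcSet_false] <;>
    exact Set.disjoint_left.2 fun _ h h' => sbtw_asymm (mem_cIoo.1 h) (mem_cIoo.1 h')

variable {R}

theorem mem_arcSet_not_iff {v : V} {x : Circ} (hp : x ≠ R.p v) (hq : x ≠ R.q v) (s : Bool) :
    x ∈ R.ArcSet v (!s) ↔ x ∉ R.ArcSet v s := by
  cases s
  exacts [sbtw_iff_not_sbtw_of_ne (R.p_ne_q v v).symm hq hp,
    sbtw_iff_not_sbtw_of_ne (R.p_ne_q v v) hp hq]

theorem SatChord.exists_mem_arcSet {T : Finset Circ} {v : V} (h : R.SatChord T v) (s : Bool) :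
    ∃ t ∈ T, t ∈ R.ArcSet v s := by
  cases s
  exacts [h.2, h.1]

theorem arcSet_subset_or_subset {u v : V} {s : Bool} (h : R.ChordInArc u v s) (s' : Bool) :
    R.ArcSet u s' ⊆ R.ArcSet v s ∨ R.ArcSet v (!s) ⊆ R.ArcSet u s' := by
  obtain ⟨hp, hq⟩ := h
  cases s' <;> cases s <;>
    simp only [Bool.not_false, Bool.not_true, arcSet_true, arcSet_false, mem_cIoo] at hp hq ⊢
  exacts [cIoo_subset_or_subset_of_sbtw hq hp, cIoo_subset_or_subset_of_sbtw hq hp,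
    cIoo_subset_or_subset_of_sbtw hp hq, cIoo_subset_or_subset_of_sbtw hp hq]

theorem exists_chordInArc_of_not_adj {a b : V} (hab : a ≠ b) (h : ¬G.Adj a b) :
    ∃ s, R.ChordInArc b a s := by
  have hiff : R.p b ∈ R.ArcSet a true ↔ R.q b ∈ R.ArcSet a true :=
    (not_xor _ _).1 fun hx => h ((R.adj b a).2 ⟨hab.symm, hx⟩).symm
  by_cases hp : R.p b ∈ R.ArcSet a true
  · exact ⟨true, hp, hiff.1 hp⟩
  · exact ⟨false,
      (mem_arcSet_not_iff (R.p_injective.ne hab.symm) (R.p_ne_q b a) true).2 hp,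
      (mem_arcSet_not_iff (R.p_ne_q a b).symm (R.q_injective.ne hab.symm) true).2
        (hiff.not.1 hp)⟩

theorem not_adj_of_chordInArc {a u v : V} {s : Bool} (hu : R.ChordInArc u a s)
    (hv : R.ChordInArc v a (!s)) : ¬G.Adj u v := by
  refine fun huv => (not_xor _ _).2 ?_ ((R.adj u v).1 huv).2
  change R.p u ∈ R.ArcSet v true ↔ R.q u ∈ R.ArcSet v true
  rcases arcSet_subset_or_subset hv true with hsub | hsub
  · have hdisj := (R.disjoint_arcSet_not a s).mono_right hsub
    exact iff_of_false (Set.disjoint_left.1 hdisj hu.1) (Set.disjoint_left.1 hdisj hu.2)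
  · rw [Bool.not_not] at hsub
    exact iff_of_true (hsub hu.1) (hsub hu.2)

theorem ChordInArc.of_adj {a u v : V} {s : Bool} (hu : R.ChordInArc u a s) (hva : v ≠ a)
    (hav : ¬G.Adj a v) (huv : G.Adj u v) : R.ChordInArc v a s := by
  obtain ⟨s', hs'⟩ := exists_chordInArc_of_not_adj hva.symm hav
  obtain rfl | rfl := Bool.eq_or_eq_not s' s
  · exact hs'
  · exact absurd huv (not_adj_of_chordInArc hu hs')

theorem ChordInArc.of_reachable {a : V} {s : Bool} {x y : {w | w ≠ a ∧ ¬G.Adj a w}}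
    (hx : R.ChordInArc x a s) (hxy : (G.induce {w | w ≠ a ∧ ¬G.Adj a w}).Reachable x y) :
    R.ChordInArc y a s := by
  obtain ⟨w⟩ := hxy
  induction w with
  | nil => exact hx
  | @cons _ v _ huv _ ih => exact ih (hx.of_adj v.2.1 v.2.2 huv)

theorem exists_chordInArc_of_isAsteroidal {A : Set V} (hA : IsAsteroidal G A) {a : V}
    (ha : a ∈ A) : ∃ s, ∀ b ∈ A, b ≠ a → R.ChordInArc b a s := by
  by_cases hne : ∃ b₀ ∈ A, b₀ ≠ a
  · obtain ⟨b₀, hb₀, hb₀a⟩ := hne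
    obtain ⟨hb₀', -, -⟩ := hA a ha b₀ hb₀ b₀ hb₀ hb₀a hb₀a
    obtain ⟨s, hs⟩ := exists_chordInArc_of_not_adj (R := R) hb₀'.1.symm hb₀'.2
    refine ⟨s, fun b hb hba => ?_⟩
    obtain ⟨_, _, hreach⟩ := hA a ha b₀ hb₀ b hb hb₀a hba
    exact ChordInArc.of_reachable hs hreach
  · exact ⟨true, fun b hb hba => (hne ⟨b, hb, hba⟩).elim⟩

theorem ChordInArc.arcSet_not_subset_arcSet {a b : V} {s t : Bool} (hb : R.ChordInArc b a s)
    (ha : R.ChordInArc a b t) : R.ArcSet a (!s) ⊆ R.ArcSet b t :=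
  (arcSet_subset_or_subset hb t).resolve_left fun hsub => R.p_notMem_arcSet a s (hsub ha.1)

theorem card_le_card_of_goodCorners {T : Finset Circ} (hT : R.GoodCorners T) {A : Finset V}
    (hA : IsAsteroidal G A) : A.card ≤ T.card := by
  choose! side hside using fun a (ha : a ∈ (A : Set V)) =>
    exists_chordInArc_of_isAsteroidal (R := R) hA ha
  choose corner hcornerT hcorner using fun a => (hT.2 a).exists_mem_arcSet (!side a)
  refine Finset.card_le_card_of_injOn corner (fun a _ => hcornerT a) fun a ha b hb hab => ?_
  by_contra hne
  have hsub := (hside a ha b hb (Ne.symm hne)).arcSet_not_subset_arcSet (hside b hb a ha hne)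
  exact Set.disjoint_left.1 (R.disjoint_arcSet_not b (side b)) (hsub (hcorner a)) (hab ▸ hcorner b)

variable (R)

theorem exists_goodCorners [Finite V] : ∃ T, R.GoodCorners T := by
  have hnot : ∀ v s, ∃ t ∈ R.ArcSet v s, t ∉ range R.p ∪ range R.q := fun v s =>
    ((R.arcSet_infinite v s).sdiff ((finite_range _).union (finite_range _))).nonempty
  choose corner hcorner hnot using hnot
  have hfin : (range fun vs : V × Bool => corner vs.1 vs.2).Finite := finite_range _
  refine ⟨hfin.toFinset, fun t ht v => ?_, fun v => ⟨?_, ?_⟩⟩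
  · obtain ⟨⟨u, s⟩, rfl⟩ := hfin.mem_toFinset.1 ht
    exact ⟨fun h => hnot u s (Or.inl ⟨v, h.symm⟩), fun h => hnot u s (Or.inr ⟨v, h.symm⟩)⟩
  · exact ⟨_, hfin.mem_toFinset.2 ⟨(v, true), rfl⟩, hcorner v true⟩
  · exact ⟨_, hfin.mem_toFinset.2 ⟨(v, false), rfl⟩, hcorner v false⟩

end CircleRep

theorem exists_goodCorners_card_eq_polygonNumber {V : Type} [Finite V] {G : SimpleGraph V}
    (R : CircleRep V G) :
    ∃ R' : CircleRep V G, ∃ T, T.card = polygonNumber G ∧ R'.GoodCorners T := by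
  obtain ⟨T, hT⟩ := R.exists_goodCorners
  have hne : {k | ∃ R : CircleRep V G, ∃ T : Finset Circ, T.card = k ∧ R.GoodCorners T}.Nonempty :=
    ⟨T.card, R, T, rfl, hT⟩
  exact Nat.sInf_mem hne

/-- for any circle graph `G`, `ψ(G) ≥ an(G)`. -/
theorem stmt11 {V : Type} [Fintype V] (G : SimpleGraph V)
    (hcirc : Nonempty (CircleRep V G)) :
    asteroidalNumber G ≤ polygonNumber G := by
  obtain ⟨R⟩ := hcirc
  obtain ⟨R', T, hcard, hT⟩ := exists_goodCorners_card_eq_polygonNumber R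
  refine csSup_le' ?_
  rintro _ ⟨A, hA, rfl⟩
  exact hcard ▸ R'.card_le_card_of_goodCorners hT hA
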